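/- arXiv:1910.11382 — 5 statements merged into one kernel-verified Lean document; each statement's English description precedes it below -/
import Mathlib

section
/- Let X be a topological space, Γ a group acting on X properly discontinuously and cocompactly, σ : X → X a continuous map, and s an automorphism of Γ satisfying the equivariance relation σ(δ • x) = s(δ) • σ(x) for all δ ∈ Γ and x ∈ X. Then only finitely many s-twisted conjugacy classes of Γ contain an element γ such that the map x ↦ γ • σ(x) has a fixed point in X; formally, there exists a finite subset F ⊆ Γ such that every γ ∈ Γ for which γ • σ(x) = x has a solution x ∈ X is of the form γ = δ·γ₀·s(δ)⁻¹ for some δ ∈ Γ and γ₀ ∈ F. -/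
/-!
If `γ • σ x = x` and `x = δ • k` with `k` in a compact fundamental set `K`, then the twisted
conjugate `δ⁻¹ * γ * s δ` maps `σ k ∈ σ '' K` to `k ∈ K`. By proper discontinuity only finitely
many elements of `Γ` move the compact set `σ '' K` to meet `K`, and these represent every elliptic
twisted conjugacy class.
-/

open scoped Pointwise

section TwistedEquivariant

variable {X Γ : Type*} [Group Γ] [MulAction Γ X] {σ : X → X} {s : Γ ≃* Γ}

theorem twisted_conj_smul_fixed (hequiv : ∀ (δ : Γ) (x : X), σ (δ • x) = s δ • σ x)
    {γ δ : Γ} {x : X} (hx : γ • σ (δ • x) = δ • x) : (δ⁻¹ * γ * s δ) • σ x = x := by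
  rw [hequiv, smul_smul] at hx
  rw [mul_assoc, mul_smul, hx, inv_smul_smul]

theorem exists_twisted_conj_fixed_mem (hequiv : ∀ (δ : Γ) (x : X), σ (δ • x) = s δ • σ x)
    {K : Set X} (hK : ∀ x : X, ∃ δ : Γ, x ∈ δ • K) {γ : Γ} {x : X} (hx : γ • σ x = x) :
    ∃ δ : Γ, ∃ k ∈ K, (δ⁻¹ * γ * s δ) • σ k = k := by
  obtain ⟨δ, k, hk, rfl⟩ := hK x
  exact ⟨δ, k, hk, twisted_conj_smul_fixed hequiv hx⟩

end TwistedEquivariant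

/-- For a properly discontinuous cocompact action of `Γ` on `X`, a continuous map
`σ : X → X`, and an automorphism `s` of `Γ` with `σ(δ • x) = s(δ) • σ(x)`, only
finitely many `s`-twisted conjugacy classes of `Γ` contain an element `γ` such that
`x ↦ γ • σ(x)` has a fixed point. -/
theorem finitely_many_elliptic_twisted_classes
    {X : Type*} [TopologicalSpace X] {Γ : Type*} [Group Γ] [MulAction Γ X]
    (σ : X → X) (hσ : Continuous σ) (s : Γ ≃* Γ)
    (hequiv : ∀ (δ : Γ) (x : X), σ (δ • x) = s δ • σ x)
    (hpd : ∀ K L : Set X, IsCompact K → IsCompact L →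
      {γ : Γ | ((γ • K) ∩ L).Nonempty}.Finite)
    (hcc : ∃ K : Set X, IsCompact K ∧ ∀ x : X, ∃ γ : Γ, x ∈ γ • K) :
    ∃ F : Finset Γ, ∀ γ : Γ, (∃ x : X, γ • σ x = x) →
      ∃ δ : Γ, ∃ γ₀ ∈ F, γ = δ * γ₀ * (s δ)⁻¹ := by
  obtain ⟨K, hK, hKcov⟩ := hcc
  have hfin := hpd (σ '' K) K (hK.image hσ) hK
  refine ⟨hfin.toFinset, fun γ ⟨x, hx⟩ => ?_⟩
  obtain ⟨δ, k, hk, hfix⟩ := exists_twisted_conj_fixed_mem hequiv hKcov hx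
  refine ⟨δ, δ⁻¹ * γ * s δ, ?_, by group⟩
  rw [hfin.mem_toFinset]
  exact ⟨k, hfix ▸ Set.smul_mem_smul_set (Set.mem_image_of_mem σ hk), hk⟩
end

section
/- Let X be a proper metric space, Γ a group acting on X by isometries, properly discontinuously and cocompactly, σ : X → X a surjective isometry, and s an automorphism of Γ satisfying the equivariance relation σ(δ • x) = s(δ) • σ(x) for all δ ∈ Γ and x ∈ X. Then there exists ε > 0 such that for every γ ∈ Γ, if the map x ↦ γ • σ(x) has no fixed point in X, then d(x, γ • σ(x)) ≥ ε for all x ∈ X. -/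
/-!
Conjugating `γσ` by `δ ∈ Γ` to `(δ⁻¹ γ s(δ)) σ` preserves both displacement and the absence of
fixed points, and by cocompactness every point can be moved into a fixed compact set `K`.
So a displacement `≤ 1` is realised at a point of `K` by an element `β` with
`β • σ(K)` meeting the `1`-thickening of `K`; proper discontinuity leaves finitely many such
`β`, and each fixed-point-free one displaces the compact set `K` by a positive minimum.
-/

open scoped Pointwise

def twistedConj {Γ : Type*} [Group Γ] (s : Γ ≃* Γ) (δ γ : Γ) : Γ := δ⁻¹ * γ * s δ

section TwistedConj

variable {X Γ : Type*} [Group Γ] [MulAction Γ X] {σ : X → X} {s : Γ ≃* Γ}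

theorem twistedConj_smul (hequiv : ∀ (δ : Γ) (x : X), σ (δ • x) = s δ • σ x) (δ γ : Γ) (y : X) :
    twistedConj s δ γ • σ y = δ⁻¹ • γ • σ (δ • y) := by
  rw [hequiv, twistedConj, mul_smul, mul_smul]

theorem dist_twistedConj_smul [PseudoMetricSpace X]
    (hequiv : ∀ (δ : Γ) (x : X), σ (δ • x) = s δ • σ x)
    {δ : Γ} (hδ : Isometry (fun x : X => δ • x)) (γ : Γ) (y : X) :
    dist y (twistedConj s δ γ • σ y) = dist (δ • y) (γ • σ (δ • y)) := by
  rw [twistedConj_smul hequiv, ← hδ.dist_eq, smul_inv_smul]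

theorem smul_isFixedPt_of_twistedConj (hequiv : ∀ (δ : Γ) (x : X), σ (δ • x) = s δ • σ x)
    {δ γ : Γ} {y : X} (hy : twistedConj s δ γ • σ y = y) : γ • σ (δ • y) = δ • y := by
  rw [twistedConj_smul hequiv] at hy
  exact inv_smul_eq_iff.mp hy

end TwistedConj

theorem exists_pos_forall_le_dist_of_finite {X ι : Type*} [MetricSpace X] {K : Set X}
    (hK : IsCompact K) {F : Set ι} (hF : F.Finite) (f : ι → X → X)
    (hf : ∀ i ∈ F, Continuous (f i)) (hfix : ∀ i ∈ F, ∀ k ∈ K, f i k ≠ k) :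
    ∃ ε > 0, ∀ i ∈ F, ∀ k ∈ K, ε ≤ dist k (f i k) := by
  set D : Set ℝ := ⋃ i ∈ F, (fun k => dist k (f i k)) '' K
  have hD : IsCompact D := hF.isCompact_biUnion fun i hi =>
    hK.image (continuous_id.dist (hf i hi))
  have hDpos : ∀ d ∈ D, 0 < d := by
    simp only [D, Set.mem_iUnion, Set.mem_image]
    rintro _ ⟨i, hi, k, hk, rfl⟩
    exact dist_pos.mpr (hfix i hi k hk).symm
  obtain ⟨ε, hε, hεD⟩ := hD.exists_forall_le' continuousOn_id hDpos
  exact ⟨ε, hε, fun i hi k hk => hεD _ (Set.mem_biUnion hi ⟨k, hk, rfl⟩)⟩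

theorem uniform_displacement_gap_nonelliptic_general
    {X : Type*} [MetricSpace X] [ProperSpace X] {Γ : Type*} [Group Γ] [MulAction Γ X]
    (hiso : ∀ γ : Γ, Isometry (fun x : X => γ • x))
    (σ : X → X) (hσiso : Isometry σ)
    (s : Γ ≃* Γ) (hequiv : ∀ (δ : Γ) (x : X), σ (δ • x) = s δ • σ x)
    (hpd : ∀ K L : Set X, IsCompact K → IsCompact L →
      {γ : Γ | ((γ • K) ∩ L).Nonempty}.Finite)
    (hcc : ∃ K : Set X, IsCompact K ∧ ∀ x : X, ∃ γ : Γ, x ∈ γ • K) :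
    ∃ ε > (0 : ℝ), ∀ γ : Γ, (¬ ∃ x : X, γ • σ x = x) →
      ∀ x : X, ε ≤ dist x (γ • σ x) := by
  obtain ⟨K, hK, hcov⟩ := hcc
  set F : Set Γ := {β | ((β • σ '' K) ∩ Metric.cthickening 1 K).Nonempty ∧ ¬ ∃ y, β • σ y = y}
  have hF : F.Finite :=
    (hpd _ _ (hK.image hσiso.continuous) hK.cthickening).subset fun β hβ => hβ.1
  obtain ⟨ε, hε, hεF⟩ := exists_pos_forall_le_dist_of_finite hK hF (fun β x => β • σ x)
    (fun β _ => (hiso β).continuous.comp hσiso.continuous)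
    (fun β hβ k _ hk => hβ.2 ⟨k, hk⟩)
  refine ⟨min 1 ε, lt_min one_pos hε, fun γ hγ x => ?_⟩
  rcases le_or_gt (dist x (γ • σ x)) 1 with hle | hgt
  · obtain ⟨δ, k, hk, rfl⟩ := hcov x
    have hdist := dist_twistedConj_smul hequiv (hiso δ) γ k
    have hβ : twistedConj s δ γ ∈ F := by
      refine ⟨⟨_, Set.smul_mem_smul_set (Set.mem_image_of_mem σ hk), ?_⟩,
        fun ⟨y, hy⟩ => hγ ⟨_, smul_isFixedPt_of_twistedConj hequiv hy⟩⟩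
      exact Metric.mem_cthickening_of_dist_le _ k 1 K hk (by rw [dist_comm, hdist]; exact hle)
    calc min 1 ε ≤ ε := min_le_right _ _
      _ ≤ dist k (twistedConj s δ γ • σ k) := hεF _ hβ k hk
      _ = dist (δ • k) (γ • σ (δ • k)) := hdist
  · exact (min_le_left _ _).trans hgt.le

/-- For a properly discontinuous, cocompact, isometric action of `Γ` on a proper metric
space `X`, a surjective isometry `σ : X → X`, and an automorphism `s` of `Γ` with
`σ(δ • x) = s(δ) • σ(x)`, there is a uniform `ε > 0` such that every `γ ∈ Γ` for which
`x ↦ γ • σ(x)` has no fixed point displaces every point by at least `ε`. -/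
theorem uniform_displacement_gap_nonelliptic
    {X : Type*} [MetricSpace X] [ProperSpace X] {Γ : Type*} [Group Γ] [MulAction Γ X]
    (hiso : ∀ γ : Γ, Isometry (fun x : X => γ • x))
    (σ : X → X) (hσiso : Isometry σ) (hσsurj : Function.Surjective σ)
    (s : Γ ≃* Γ) (hequiv : ∀ (δ : Γ) (x : X), σ (δ • x) = s δ • σ x)
    (hpd : ∀ K L : Set X, IsCompact K → IsCompact L →
      {γ : Γ | ((γ • K) ∩ L).Nonempty}.Finite)
    (hcc : ∃ K : Set X, IsCompact K ∧ ∀ x : X, ∃ γ : Γ, x ∈ γ • K) :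
    ∃ ε > (0 : ℝ), ∀ γ : Γ, (¬ ∃ x : X, γ • σ x = x) →
      ∀ x : X, ε ≤ dist x (γ • σ x) :=
  uniform_displacement_gap_nonelliptic_general hiso σ hσiso s hequiv hpd hcc
end

section
/- Let X be a topological space, Γ a torsion-free group acting properly discontinuously on X, σ : X → X a map, and s an automorphism of Γ satisfying the equivariance relation σ(δ • x) = s(δ) • σ(x) for all δ ∈ Γ and x ∈ X. Suppose γ₁, γ₂, δ ∈ Γ and x₁, x₂ ∈ X satisfy γ₁ • σ(x₁) = x₁, γ₂ • σ(x₂) = x₂, and x₂ = δ • x₁. Then γ₂ = δ·γ₁·s(δ)⁻¹. In particular, if γ₁ and γ₂ are not s-twisted conjugate, the images in the quotient Γ\X of the fixed-point sets of x ↦ γ₁ • σ(x) and x ↦ γ₂ • σ(x) are disjoint. -/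
open scoped Pointwise

/-- Stabilizers are trivial: proper discontinuity + torsion-free. -/
theorem stab_trivial_aux
    {X : Type*} [TopologicalSpace X] {Γ : Type*} [Group Γ] [MulAction Γ X]
    (htf : ∀ g : Γ, g ≠ 1 → ¬IsOfFinOrder g)
    (hpd : ∀ K L : Set X, IsCompact K → IsCompact L →
      {γ : Γ | ((γ • K) ∩ L).Nonempty}.Finite)
    {g : Γ} {x : X} (hfix : g • x = x) : g = 1 := by
  by_contra hg
  have hfin := hpd {x} {x} isCompact_singleton isCompact_singleton
  have hmem : ∀ n : ℕ, g ^ n ∈ {γ : Γ | ((γ • ({x} : Set X)) ∩ {x}).Nonempty} := by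
    intro n
    have : (g ^ n) • x = x := by
      induction n with
      | zero => simp
      | succ k ih => rw [pow_succ, mul_smul, hfix, ih]
    exact ⟨x, ⟨x, rfl, this⟩, rfl⟩
  have hinj : ¬ Function.Injective (fun n : ℕ => g ^ n) := by
    intro hi
    exact (Set.infinite_of_injective_forall_mem hi hmem) hfin
  rw [Function.not_injective_iff] at hinj
  obtain ⟨m, n, hmn, hne⟩ := hinj
  wlog h : n < m generalizing m n
  · exact this n m hmn.symm hne.symm (by omega)
  have : g ^ (m - n) = 1 := by
    have : g ^ (m - n) * g ^ n = g ^ n := by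
      rw [← pow_add]
      rw [Nat.sub_add_cancel h.le, hmn]
    exact mul_right_cancel (by rw [this, one_mul])
  have : IsOfFinOrder g := isOfFinOrder_iff_pow_eq_one.2 ⟨m - n, by omega, this⟩
  exact htf g hg this

/-- For a properly discontinuous action of a torsion-free group `Γ` on `X`, a map
`σ : X → X`, and an automorphism `s` of `Γ` with `σ(δ • x) = s(δ) • σ(x)`: if
`γ₁ • σ(x₁) = x₁`, `γ₂ • σ(x₂) = x₂` and `x₂ = δ • x₁`, then `γ₂ = δ·γ₁·s(δ)⁻¹`.
In particular, if `γ₁, γ₂` are not `s`-twisted conjugate, the images in `Γ\X` of the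
fixed-point sets of `x ↦ γ₁ • σ(x)` and `x ↦ γ₂ • σ(x)` are disjoint. -/
theorem fixedPointSets_disjoint_in_quotient
    {X : Type*} [TopologicalSpace X] {Γ : Type*} [Group Γ] [MulAction Γ X]
    (htf : ∀ g : Γ, g ≠ 1 → ¬IsOfFinOrder g)
    (hpd : ∀ K L : Set X, IsCompact K → IsCompact L →
      {γ : Γ | ((γ • K) ∩ L).Nonempty}.Finite)
    (σ : X → X) (s : Γ ≃* Γ)
    (hequiv : ∀ (δ : Γ) (x : X), σ (δ • x) = s δ • σ x) :
    (∀ (γ₁ γ₂ δ : Γ) (x₁ x₂ : X), γ₁ • σ x₁ = x₁ → γ₂ • σ x₂ = x₂ → x₂ = δ • x₁ →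
      γ₂ = δ * γ₁ * (s δ)⁻¹) ∧
    ∀ γ₁ γ₂ : Γ, (¬ ∃ δ : Γ, γ₂ = δ * γ₁ * (s δ)⁻¹) →
      Disjoint
        (Quotient.mk (MulAction.orbitRel Γ X) '' {x : X | γ₁ • σ x = x})
        (Quotient.mk (MulAction.orbitRel Γ X) '' {x : X | γ₂ • σ x = x}) := by
  have key : ∀ (γ₁ γ₂ δ : Γ) (x₁ x₂ : X), γ₁ • σ x₁ = x₁ → γ₂ • σ x₂ = x₂ → x₂ = δ • x₁ →
      γ₂ = δ * γ₁ * (s δ)⁻¹ := by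
    intro γ₁ γ₂ δ x₁ x₂ h₁ h₂ h₁₂
    have hσ : σ x₁ = γ₁⁻¹ • x₁ := by rw [eq_inv_smul_iff]; exact h₁
    have : (δ⁻¹ * γ₂ * s δ * γ₁⁻¹) • x₁ = x₁ := by
      have := h₂
      rw [h₁₂, hequiv, hσ] at this
      calc (δ⁻¹ * γ₂ * s δ * γ₁⁻¹) • x₁
          = δ⁻¹ • γ₂ • (s δ) • γ₁⁻¹ • x₁ := by simp [mul_smul]
        _ = δ⁻¹ • δ • x₁ := by rw [this]
        _ = x₁ := by simp [← mul_smul]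
    have h1 := stab_trivial_aux htf hpd this
    have h2 : δ⁻¹ * γ₂ * s δ = γ₁ := by
      have := mul_eq_one_iff_eq_inv.1 h1
      rwa [inv_inv] at this
    rw [← h2]; group
  refine ⟨key, ?_⟩
  intro γ₁ γ₂ hntw
  rw [Set.disjoint_left]
  rintro q ⟨x₁, hx₁, rfl⟩ ⟨x₂, hx₂, hq⟩
  have : MulAction.orbitRel Γ X x₂ x₁ := Quotient.exact hq
  obtain ⟨δ, hδ⟩ := this
  exact hntw ⟨δ, key γ₁ γ₂ δ x₁ x₂ hx₁ hx₂ hδ.symm⟩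
end

section
/- Let G be a finite group, N a normal subgroup of G, and σ ∈ G such that G is generated by N together with σ. Let V be a finite-dimensional complex representation of G that is irreducible, and suppose that the restriction of V to N is not irreducible. Then the character of V vanishes on the coset Nσ: for every n ∈ N, Tr_V(ρ(n·σ)) = 0. -/
/-!
Conjugation by `ρ σ` preserves the commutant `End_N(V)` and has finite order there, so it is
diagonalizable. Its fixed points commute with `ρ` on the generators `N ∪ {σ}`, hence are scalars
by Schur's lemma, whereas Maschke's theorem turns a nontrivial `N`-subrepresentation into a
non-scalar element of `End_N(V)`. So there is `T ≠ 0` in `End_N(V)` with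
`ρ σ * T = μ • (T * ρ σ)` for some `μ ≠ 1`. The range of `T` is `G`-stable, so `T` is invertible,
and `T⁻¹ ρ(nσ) T = μ ρ(nσ)` gives `tr ρ(nσ) = μ tr ρ(nσ)`, i.e. `tr ρ(nσ) = 0`.
-/

open Module

theorem Module.End.exists_hasEigenvector_ne_one_of_pow_eq_one {K E : Type*} [Field K]
    [IsAlgClosed K] [AddCommGroup E] [Module K E] [FiniteDimensional K E] {f : End K E} {m : ℕ}
    (hm : (m : K) ≠ 0) (hf : f ^ m = 1) (hf1 : f ≠ 1) :
    ∃ μ ≠ 1, ∃ x, f.HasEigenvector μ x := by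
  have hss : f.IsSemisimple := by
    refine End.isSemisimple_of_squarefree_aeval_eq_zero
      (Polynomial.separable_X_pow_sub_C 1 hm one_ne_zero).squarefree ?_
    simp [hf]
  by_contra! h
  have hle : ∀ μ, f.eigenspace μ ≤ f.eigenspace 1 := by
    intro μ
    rcases eq_or_ne μ 1 with rfl | hμ
    · exact le_rfl
    · intro x hx
      by_contra hx1
      exact h μ hμ x ⟨hx, fun h0 => hx1 (h0 ▸ Submodule.zero_mem _)⟩
  apply hf1
  ext x
  have hx : x ∈ f.eigenspace 1 := iSup_le hle (hss.iSup_eigenspace_eq_top ▸ Submodule.mem_top)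
  simpa using End.mem_eigenspace_iff.1 hx

theorem LinearMap.trace_eq_zero_of_mul_eq_smul_mul {R M : Type*} [CommRing R] [IsDomain R]
    [AddCommGroup M] [Module R M] {f T : End R M} {c : R} (hT : IsUnit T)
    (h : f * T = c • (T * f)) (hc : c ≠ 1) : LinearMap.trace R M f = 0 := by
  obtain ⟨u, rfl⟩ := hT
  have hfix : LinearMap.trace R M f = c * LinearMap.trace R M f := by
    calc LinearMap.trace R M f = LinearMap.trace R M (↑u⁻¹ * (f * u)) := by
          rw [LinearMap.trace_mul_comm, mul_assoc, u.mul_inv, mul_one]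
      _ = c * LinearMap.trace R M f := by
          rw [h, mul_smul_comm, map_smul, ← mul_assoc, u.inv_mul, one_mul, smul_eq_mul]
  by_contra h0
  exact hc (mul_right_cancel₀ h0 (by rw [one_mul]; exact hfix.symm))

namespace Representation

variable {k G V : Type*} [Field k] [Group G] [AddCommGroup V] [Module k V]
  (ρ : Representation k G V)

theorem linHom_self_apply_mul (g : G) (T : End k V) : linHom ρ ρ g T * ρ g = ρ g * T := by
  rw [linHom_apply, ← End.mul_eq_comp, ← End.mul_eq_comp, mul_assoc, mul_assoc, ← map_mul,
    inv_mul_cancel, map_one, mul_one]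

theorem linHom_self_apply_eq_iff_commute (g : G) (T : End k V) :
    linHom ρ ρ g T = T ↔ Commute (ρ g) T := by
  rw [commute_iff_eq, ← linHom_self_apply_mul, (IsUnit.map ρ (Group.isUnit g)).mul_left_inj]

theorem mem_invariants_linHom_comp_subtype_iff (N : Subgroup G) (T : End k V) :
    T ∈ invariants ((linHom ρ ρ).comp N.subtype) ↔ ∀ n ∈ N, Commute (ρ n) T := by
  simp only [mem_invariants, MonoidHom.comp_apply, Subgroup.coe_subtype, Subtype.forall,
    linHom_self_apply_eq_iff_commute]

theorem eq_bot_or_eq_top_of_closure_eq_top [Finite G] {S : Set G}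
    (hS : Subgroup.closure S = ⊤)
    (hirr : ∀ W : Submodule k V, (∀ g : G, ∀ v ∈ W, ρ g v ∈ W) → W = ⊥ ∨ W = ⊤)
    (W : Submodule k V) (hW : ∀ s ∈ S, ∀ v ∈ W, ρ s v ∈ W) : W = ⊥ ∨ W = ⊤ := by
  refine hirr W fun g => ?_
  have hg : g ∈ Submonoid.closure S := by
    rw [← Subgroup.closure_toSubmonoid_of_finite, hS]
    trivial
  induction hg using Submonoid.closure_induction with
  | mem s hs => exact hW s hs
  | one => simp
  | mul a b _ _ ha hb => exact fun v hv => by simpa using ha _ (hb v hv)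

theorem exists_eq_smul_one_of_forall_commute [IsAlgClosed k] [FiniteDimensional k V]
    [Nontrivial V] {S : Set G}
    (hirr : ∀ W : Submodule k V, (∀ s ∈ S, ∀ v ∈ W, ρ s v ∈ W) → W = ⊥ ∨ W = ⊤)
    {T : End k V} (hT : ∀ s ∈ S, Commute (ρ s) T) : ∃ c : k, T = c • 1 := by
  obtain ⟨c, hc⟩ := End.exists_eigenvalue T
  refine ⟨c, ?_⟩
  have hinv : ∀ s ∈ S, ∀ v ∈ T.eigenspace c, ρ s v ∈ T.eigenspace c := by
    intro s hs v hv
    rw [End.mem_eigenspace_iff] at hv ⊢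
    rw [← End.mul_apply, ← (hT s hs).eq, End.mul_apply, hv, map_smul]
  rcases hirr _ hinv with h | h
  · exact absurd h hc
  · ext v
    simpa using End.mem_eigenspace_iff.1 (h ▸ Submodule.mem_top : v ∈ T.eigenspace c)

theorem isUnit_of_forall_mul_eq_smul_mul [FiniteDimensional k V] {S : Set G}
    (hirr : ∀ W : Submodule k V, (∀ s ∈ S, ∀ v ∈ W, ρ s v ∈ W) → W = ⊥ ∨ W = ⊤)
    {T : End k V} (hT0 : T ≠ 0) (hT : ∀ s ∈ S, ∃ c : k, ρ s * T = c • (T * ρ s)) :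
    IsUnit T := by
  have hinv : ∀ s ∈ S, ∀ v ∈ LinearMap.range T, ρ s v ∈ LinearMap.range T := by
    rintro s hs _ ⟨w, rfl⟩
    obtain ⟨c, hc⟩ := hT s hs
    exact ⟨c • ρ s w, by simpa using congr($hc w).symm⟩
  rcases hirr _ hinv with h | h
  · exact absurd (LinearMap.range_eq_bot.1 h) hT0
  · have hsurj := LinearMap.range_eq_top.1 h
    exact (End.isUnit_iff T).2 ⟨LinearMap.injective_iff_surjective.2 hsurj, hsurj⟩

theorem exists_forall_commute_ne_smul_one [Finite G] [NeZero (Nat.card G : k)]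
    {W : Submodule k V} (hW : ∀ g : G, ∀ v ∈ W, ρ g v ∈ W) (hbot : W ≠ ⊥) (htop : W ≠ ⊤) :
    ∃ T : End k V, (∀ g, Commute (ρ g) T) ∧ ∀ c : k, T ≠ c • 1 := by
  obtain ⟨U, hWU⟩ := exists_isCompl (⟨W, hW⟩ : Subrepresentation ρ)
  have hcompl : IsCompl W U.toSubmodule :=
    ⟨disjoint_iff.2 congr(Subrepresentation.toSubmodule $hWU.inf_eq_bot),
      codisjoint_iff.2 congr(Subrepresentation.toSubmodule $hWU.sup_eq_top)⟩
  have hP := W.isIdempotentElem_projection hcompl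
  refine ⟨W.projection U.toSubmodule hcompl,
    fun g => (LinearMap.IsIdempotentElem.commute_iff hP |>.2 ⟨?_, ?_⟩).symm, fun c h => ?_⟩
  · rw [Submodule.range_projection]
    exact hW g
  · rw [Submodule.ker_projection]
    exact fun v hv => U.apply_mem_toSubmodule g hv
  rcases eq_or_ne c 0 with rfl | hc0
  · apply hbot
    rw [← Submodule.range_projection hcompl, h, zero_smul, LinearMap.range_zero]
  · apply htop
    have hU : U.toSubmodule = ⊥ := by
      rw [← Submodule.ker_projection hcompl, h, LinearMap.ker_smul _ _ hc0]
      exact LinearMap.ker_id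
    exact eq_top_of_isCompl_bot (hU ▸ hcompl)

theorem exists_ne_zero_commute_and_mul_eq_smul_mul [Finite G] [IsAlgClosed k] [CharZero k]
    [FiniteDimensional k V] [Nontrivial V] {N : Subgroup G} [N.Normal] {σ : G}
    (hirr : ∀ W : Submodule k V, (∀ s ∈ (N : Set G) ∪ {σ}, ∀ v ∈ W, ρ s v ∈ W) → W = ⊥ ∨ W = ⊤)
    {T₀ : End k V} (hT₀N : ∀ n ∈ N, Commute (ρ n) T₀) (hT₀ : ∀ c : k, T₀ ≠ c • 1) :
    ∃ μ : k, μ ≠ 1 ∧ ∃ T : End k V, T ≠ 0 ∧ (∀ n ∈ N, Commute (ρ n) T) ∧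
      ρ σ * T = μ • (T * ρ σ) := by
  set A : End k (invariants ((linHom ρ ρ).comp N.subtype)) := toInvariants (linHom ρ ρ) N σ
  have hA : A ^ orderOf σ = 1 := by rw [← map_pow, pow_orderOf_eq_one, map_one]
  have hA1 : A ≠ 1 := by
    intro h
    have hfix : linHom ρ ρ σ T₀ = T₀ :=
      congr(Subtype.val ($h ⟨T₀, (mem_invariants_linHom_comp_subtype_iff ρ N T₀).2 hT₀N⟩))
    obtain ⟨c, hc⟩ := exists_eq_smul_one_of_forall_commute ρ hirr (T := T₀) <| by
      rintro s (hs | rfl)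
      · exact hT₀N s hs
      · exact (linHom_self_apply_eq_iff_commute ρ s T₀).1 hfix
    exact hT₀ c hc
  obtain ⟨μ, hμ, T, hTμ, hT0⟩ := End.exists_hasEigenvector_ne_one_of_pow_eq_one
    (by exact_mod_cast (orderOf_pos σ).ne') hA hA1
  refine ⟨μ, hμ, T, fun h => hT0 (Subtype.ext h),
    (mem_invariants_linHom_comp_subtype_iff ρ N T).1 T.2, ?_⟩
  have hAT : linHom ρ ρ σ T = μ • (T : End k V) :=
    congr(Subtype.val $(End.mem_eigenspace_iff.1 hTμ))
  rw [← linHom_self_apply_mul, hAT, smul_mul_assoc]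

end Representation

/-- Let `G` be a finite group, `N ⊴ G`, and `σ ∈ G` with `G` generated by `N` and `σ`.
If `V` is a finite-dimensional complex representation of `G` which is irreducible but
whose restriction to `N` is not irreducible, then the character of `V` vanishes on the
coset `Nσ`. -/
theorem character_vanishes_on_coset
    {G : Type*} [Group G] [Fintype G] (N : Subgroup G) [N.Normal] (σ : G)
    (hgen : Subgroup.closure ((N : Set G) ∪ {σ}) = ⊤)
    {V : Type*} [AddCommGroup V] [Module ℂ V] [FiniteDimensional ℂ V]
    (ρ : Representation ℂ G V)
    (hirr : ∀ W : Submodule ℂ V, (∀ g : G, ∀ v ∈ W, ρ g v ∈ W) → W = ⊥ ∨ W = ⊤)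
    (hnotirrN : ¬ ∀ W : Submodule ℂ V, (∀ n ∈ N, ∀ v ∈ W, ρ n v ∈ W) → W = ⊥ ∨ W = ⊤) :
    ∀ n ∈ N, LinearMap.trace ℂ V (ρ (n * σ)) = 0 := by
  intro n hn
  push Not at hnotirrN
  obtain ⟨W, hWN, hWbot, hWtop⟩ := hnotirrN
  obtain ⟨w, -, hw⟩ := Submodule.exists_mem_ne_zero_of_ne_bot hWbot
  have : Nontrivial V := nontrivial_of_ne w 0 hw
  have hirrS := ρ.eq_bot_or_eq_top_of_closure_eq_top hgen hirr
  obtain ⟨T₀, hT₀N, hT₀⟩ :=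
    Representation.exists_forall_commute_ne_smul_one (ρ.comp N.subtype) (fun m => hWN m m.2)
      hWbot hWtop
  obtain ⟨μ, hμ, T, hT0, hTN, hTσ⟩ :=
    ρ.exists_ne_zero_commute_and_mul_eq_smul_mul hirrS (fun m hm => hT₀N ⟨m, hm⟩) hT₀
  have hT : IsUnit T := ρ.isUnit_of_forall_mul_eq_smul_mul hirrS hT0 <| by
    rintro s (hs | rfl)
    · exact ⟨1, by rw [one_smul, (hTN s hs).eq]⟩
    · exact ⟨μ, hTσ⟩
  refine LinearMap.trace_eq_zero_of_mul_eq_smul_mul hT ?_ hμ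
  rw [map_mul, mul_assoc, hTσ, mul_smul_comm, ← mul_assoc, (hTN n hn).eq, mul_assoc]
end

section
/- Let ι be a countable type, D : ι → ℝ a function, and let ε > 0, c > 0, C > 0 and m ∈ ℕ be such that D i ≥ ε for all i ∈ ι and, for every R > 0, the set {i ∈ ι : D i ≤ R} has at most C·e^{cR} elements. Then there exist constants C' > 0 and c' > 0 such that for all t with 0 < t ≤ 1, Σ_{i∈ι} t^{-m/2}·exp(−(D i)²/(4t)) ≤ C'·exp(−c'/t) (in particular the series converges). -/
/-!
Since `D i ≥ ε` and `t ≤ 1`, the Gaussian `exp (-D²/4t)` is at most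
`exp (-ε²/16t) · exp (-ε²/16t) · exp (-D²/8)`. One factor `exp (-ε²/16t)` absorbs the blow-up
`t^(-m/2) ≤ t^(-m)` (as `x^m e^(-ax) ≤ m!/a^m`), the other is the claimed decay, and what remains is
the `t`-independent series `∑ exp (-D²/8)`. It converges because the shell `⌊D⌋₊ = k` holds at
most `C e^(c(k+1))` indices, each contributing at most `e^(-k²/8)`.
-/

open Real Finset

lemma pow_mul_exp_neg_mul_le {a : ℝ} (ha : 0 < a) {x : ℝ} (hx : 0 ≤ x) (m : ℕ) :
    x ^ m * exp (-(a * x)) ≤ m.factorial / a ^ m := by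
  have := Real.pow_div_factorial_le_exp _ (mul_nonneg ha.le hx) m
  rw [exp_neg, ← div_eq_mul_inv, div_le_div_iff₀ (exp_pos _) (by positivity)]
  rw [div_le_iff₀ (by positivity), mul_pow] at this
  linarith

lemma rpow_neg_half_mul_exp_neg_div_le {a : ℝ} (ha : 0 < a) {t : ℝ} (ht₀ : 0 < t) (ht₁ : t ≤ 1)
    (m : ℕ) : t ^ (-(m : ℝ) / 2) * exp (-a / t) ≤ m.factorial / a ^ m :=
  calc t ^ (-(m : ℝ) / 2) * exp (-a / t)
      ≤ t ^ (-(m : ℝ)) * exp (-a / t) := by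
        refine mul_le_mul_of_nonneg_right (rpow_le_rpow_of_exponent_ge ht₀ ht₁ ?_) (exp_pos _).le
        linarith [(m.cast_nonneg : (0 : ℝ) ≤ m)]
    _ = t⁻¹ ^ m * exp (-(a * t⁻¹)) := by
        rw [rpow_neg ht₀.le, rpow_natCast, inv_pow, neg_div, div_eq_mul_inv]
    _ ≤ m.factorial / a ^ m := pow_mul_exp_neg_mul_le ha (inv_nonneg.mpr ht₀.le) m

lemma summable_exp_mul_sub_sq_div {s : ℝ} (hs : 0 < s) (b : ℝ) :
    Summable fun n : ℕ => exp (b * n - n ^ 2 / s) := by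
  refine Summable.of_nonneg_of_le (fun n => (exp_pos _).le) (fun n => ?_)
    (summable_exp_neg_nat.mul_left (exp (s * (b + 1) ^ 2 / 4)))
  rw [← exp_add, exp_le_exp]
  have hsq : 0 ≤ (n - s * (b + 1) / 2) ^ 2 / s := by positivity
  have h : (n - s * (b + 1) / 2) ^ 2 / s = n ^ 2 / s - (b + 1) * n + s * (b + 1) ^ 2 / 4 := by
    field_simp
    ring
  linarith

section Counting

variable {ι : Type*} (D : ι → ℝ) {c C : ℝ}

lemma card_filter_natFloor_eq_le
    (hcount : ∀ R : ℝ, 0 < R → {i : ι | D i ≤ R}.Finite ∧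
      (Nat.card {i : ι | D i ≤ R} : ℝ) ≤ C * exp (c * R))
    (s : Finset ι) (k : ℕ) :
    (#{i ∈ s | ⌊D i⌋₊ = k} : ℝ) ≤ C * exp (c * (k + 1)) := by
  obtain ⟨hfin, hcard⟩ := hcount (k + 1) (by positivity)
  have hsub : {i ∈ s | ⌊D i⌋₊ = k} ⊆ hfin.toFinset := by
    intro i hi
    rw [mem_filter] at hi
    rw [Set.Finite.mem_toFinset, Set.mem_ofPred_eq, ← hi.2]
    exact (Nat.lt_floor_add_one (D i)).le
  calc (#{i ∈ s | ⌊D i⌋₊ = k} : ℝ) ≤ #hfin.toFinset := by exact_mod_cast card_le_card hsub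
    _ = Nat.card {i : ι | D i ≤ k + 1} := by
        rw [Nat.card_coe_set_eq, Set.ncard_eq_toFinset_card _ hfin]
    _ ≤ C * exp (c * (k + 1)) := hcard

lemma summable_exp_neg_sq_div_of_card_le
    (hcount : ∀ R : ℝ, 0 < R → {i : ι | D i ≤ R}.Finite ∧
      (Nat.card {i : ι | D i ≤ R} : ℝ) ≤ C * exp (c * R))
    {s : ℝ} (hs : 0 < s) :
    Summable fun i => exp (-D i ^ 2 / s) := by
  have hC : 0 ≤ C := by
    obtain ⟨-, hcard⟩ := hcount 1 one_pos
    exact nonneg_of_mul_nonneg_left ((Nat.cast_nonneg _).trans hcard) (exp_pos _)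
  set g : ℕ → ℝ := fun k => C * exp (c * (k + 1)) * exp (-k ^ 2 / s)
  have hg : Summable g := by
    have hg_eq : g = fun k : ℕ => C * exp c * exp (c * k - k ^ 2 / s) := by
      ext k
      simp only [g, mul_assoc, ← exp_add]
      ring_nf
    rw [hg_eq]
    exact (summable_exp_mul_sub_sq_div hs c).mul_left _
  refine summable_of_sum_le (fun i => (exp_pos _).le) (c := ∑' k, g k) fun t => ?_
  calc ∑ i ∈ t, exp (-D i ^ 2 / s) ≤ ∑ i ∈ t, exp (-(⌊D i⌋₊ : ℝ) ^ 2 / s) := by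
        refine sum_le_sum fun i _ => exp_le_exp.mpr (div_le_div_of_nonneg_right ?_ hs.le)
        rw [neg_le_neg_iff]
        rcases le_or_gt 0 (D i) with hD | hD
        · exact pow_le_pow_left₀ (Nat.cast_nonneg _) (Nat.floor_le hD) 2
        · simp [Nat.floor_of_nonpos hD.le, sq_nonneg]
    _ = ∑ k ∈ t.image (fun i => ⌊D i⌋₊), #{i ∈ t | ⌊D i⌋₊ = k} • exp (-(k : ℝ) ^ 2 / s) :=
        sum_comp (fun k : ℕ => exp (-(k : ℝ) ^ 2 / s)) _
    _ ≤ ∑ k ∈ t.image (fun i => ⌊D i⌋₊), g k := by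
        refine sum_le_sum fun k _ => ?_
        rw [nsmul_eq_mul]
        exact mul_le_mul_of_nonneg_right (card_filter_natFloor_eq_le D hcount t k) (exp_pos _).le
    _ ≤ ∑' k, g k := hg.sum_le_tsum _ fun k _ => by positivity

end Counting

lemma neg_sq_div_four_mul_le {ε x t : ℝ} (hε : 0 ≤ ε) (hx : ε ≤ x) (ht₀ : 0 < t) (ht₁ : t ≤ 1) :
    -x ^ 2 / (4 * t) ≤ -(ε ^ 2 / 16) / t + -(ε ^ 2 / 16) / t + -x ^ 2 / 8 := by
  have hsq : ε ^ 2 ≤ x ^ 2 := pow_le_pow_left₀ hε hx 2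
  have hsplit : x ^ 2 / (4 * t) = x ^ 2 / (8 * t) + x ^ 2 / (8 * t) := by ring
  have hε_le : ε ^ 2 / (8 * t) ≤ x ^ 2 / (8 * t) := by gcongr
  have ht_le : x ^ 2 / 8 ≤ x ^ 2 / (8 * t) :=
    div_le_div_of_nonneg_left (sq_nonneg x) (by positivity) (by linarith)
  have hε_eq : (ε ^ 2 / 16) / t + (ε ^ 2 / 16) / t = ε ^ 2 / (8 * t) := by field_simp; ring
  simp only [neg_div]
  linarith

lemma rpow_mul_exp_neg_sq_div_le {ε x t : ℝ} (hε : 0 < ε) (hx : ε ≤ x) (ht₀ : 0 < t)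
    (ht₁ : t ≤ 1) (m : ℕ) :
    t ^ (-(m : ℝ) / 2) * exp (-x ^ 2 / (4 * t)) ≤
      m.factorial / (ε ^ 2 / 16) ^ m * exp (-(ε ^ 2 / 16) / t) * exp (-x ^ 2 / 8) :=
  calc t ^ (-(m : ℝ) / 2) * exp (-x ^ 2 / (4 * t))
      ≤ t ^ (-(m : ℝ) / 2) * exp (-(ε ^ 2 / 16) / t + -(ε ^ 2 / 16) / t + -x ^ 2 / 8) := by
        gcongr
        exact neg_sq_div_four_mul_le hε.le hx ht₀ ht₁
    _ = t ^ (-(m : ℝ) / 2) * exp (-(ε ^ 2 / 16) / t) * exp (-(ε ^ 2 / 16) / t) *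
          exp (-x ^ 2 / 8) := by
        rw [exp_add, exp_add]
        ring
    _ ≤ m.factorial / (ε ^ 2 / 16) ^ m * exp (-(ε ^ 2 / 16) / t) * exp (-x ^ 2 / 8) := by
        gcongr
        exact rpow_neg_half_mul_exp_neg_div_le (by positivity) ht₀ ht₁ m

theorem gaussian_sum_exponential_decay_general
    {ι : Type*} (D : ι → ℝ) (ε c C : ℝ) (m : ℕ)
    (hε : 0 < ε)
    (hD : ∀ i, ε ≤ D i)
    (hcount : ∀ R : ℝ, 0 < R → {i : ι | D i ≤ R}.Finite ∧
      (Nat.card {i : ι | D i ≤ R} : ℝ) ≤ C * Real.exp (c * R)) :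
    ∃ C' > (0 : ℝ), ∃ c' > (0 : ℝ), ∀ t : ℝ, 0 < t → t ≤ 1 →
      Summable (fun i : ι => t ^ (-(m : ℝ) / 2) * Real.exp (-(D i) ^ 2 / (4 * t))) ∧
      ∑' i : ι, t ^ (-(m : ℝ) / 2) * Real.exp (-(D i) ^ 2 / (4 * t)) ≤
        C' * Real.exp (-c' / t) := by
  have hsum := summable_exp_neg_sq_div_of_card_le D hcount (s := 8) (by norm_num)
  set a := ε ^ 2 / 16
  set M := (m.factorial : ℝ) / a ^ m
  set K := ∑' i, exp (-D i ^ 2 / 8)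
  have hK : 0 ≤ K := tsum_nonneg fun i => (exp_pos _).le
  -- `K` vanishes when `ι` is empty, while `C'` has to be positive.
  refine ⟨M * (K + 1), by positivity, a, by positivity, fun t ht₀ ht₁ => ?_⟩
  have hle i := rpow_mul_exp_neg_sq_div_le hε (hD i) ht₀ ht₁ m
  have hmaj := hsum.mul_left (M * exp (-a / t))
  have hsumt := hmaj.of_nonneg_of_le (fun i => by positivity) hle
  refine ⟨hsumt, ?_⟩
  calc ∑' i, t ^ (-(m : ℝ) / 2) * exp (-D i ^ 2 / (4 * t))
      ≤ ∑' i, M * exp (-a / t) * exp (-D i ^ 2 / 8) := hsumt.tsum_le_tsum hle hmaj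
    _ = M * exp (-a / t) * K := tsum_mul_left
    _ ≤ M * (K + 1) * exp (-a / t) := by
        rw [mul_right_comm]
        gcongr
        linarith

/-- If `D : ι → ℝ` is bounded below by `ε > 0` and satisfies the exponential counting bound
`#{i : D i ≤ R} ≤ C·e^{cR}`, then there are `C', c' > 0` such that for `0 < t ≤ 1`,
`Σ_i t^{-m/2}·exp(−(D i)²/(4t)) ≤ C'·exp(−c'/t)` (and the series converges). -/
theorem gaussian_sum_exponential_decay
    {ι : Type*} [Countable ι] (D : ι → ℝ) (ε c C : ℝ) (m : ℕ)
    (hε : 0 < ε) (hc : 0 < c) (hC : 0 < C)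
    (hD : ∀ i, ε ≤ D i)
    (hcount : ∀ R : ℝ, 0 < R → {i : ι | D i ≤ R}.Finite ∧
      (Nat.card {i : ι | D i ≤ R} : ℝ) ≤ C * Real.exp (c * R)) :
    ∃ C' > (0 : ℝ), ∃ c' > (0 : ℝ), ∀ t : ℝ, 0 < t → t ≤ 1 →
      Summable (fun i : ι => t ^ (-(m : ℝ) / 2) * Real.exp (-(D i) ^ 2 / (4 * t))) ∧
      ∑' i : ι, t ^ (-(m : ℝ) / 2) * Real.exp (-(D i) ^ 2 / (4 * t)) ≤
        C' * Real.exp (-c' / t) :=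
  gaussian_sum_exponential_decay_general D ε c C m hε hD hcount
end
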